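/- arXiv:2502.13150 — 3 statements merged into one kernel-verified Lean document; each statement's English description precedes it below -/
import Mathlib

section
/- Let h : [0,∞) → [0,∞) be locally integrable, let q > 1, and let u₀ : G → ℝ satisfy 0 ≤ u₀(x) ≤ N for all x ∈ G where N ≥ 0. Let M > N and let T > 0 satisfy N + M^q ∫₀^T h(s) ds ≤ M. Then for every function u : G × (0,T) → ℝ with 0 ≤ u(x,t) ≤ M for all x ∈ G, t ∈ (0,T), the function Ψu defined by (Ψu)(x,t) := ∑_{y∈G} p(x,y,t) u₀(y) μ(y) + ∫₀^t ∑_{y∈G} p(x,y,t−s) h(s) u(y,s)^q μ(y) ds satisfies 0 ≤ (Ψu)(x,t) ≤ M for all x ∈ G and t ∈ (0,T). -/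
/-- the map `Ψ` preserves the set `{0 ≤ u ≤ M}` when
`N + M^q ∫₀^T h ≤ M`. -/
theorem Psi_maps_ball_to_ball
    {G : Type*} [Countable G] (μ : G → ℝ) (hμ : ∀ x, 0 < μ x)
    (p : G → G → ℝ → ℝ) (hp : ∀ x y t, 0 < t → 0 ≤ p x y t)
    (hsub : ∀ x (t : ℝ), 0 < t →
      Summable (fun y => p x y t * μ y) ∧ (∑' y, p x y t * μ y) ≤ 1)
    (h : ℝ → ℝ) (hh0 : ∀ t, 0 ≤ t → 0 ≤ h t)
    (hloc : MeasureTheory.LocallyIntegrableOn h (Set.Ici 0))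
    (q : ℝ) (hq : 1 < q)
    (N : ℝ) (hN : 0 ≤ N)
    (u₀ : G → ℝ) (hu₀ : ∀ x, 0 ≤ u₀ x ∧ u₀ x ≤ N)
    (M : ℝ) (hM : N < M)
    (T : ℝ) (hT : 0 < T)
    (hsmall : N + M ^ q * ∫ s in (0:ℝ)..T, h s ≤ M) :
    ∀ u : G → ℝ → ℝ, (∀ x t, t ∈ Set.Ioo (0:ℝ) T → 0 ≤ u x t ∧ u x t ≤ M) →
      ∀ x t, t ∈ Set.Ioo (0:ℝ) T →
        0 ≤ (∑' y, p x y t * u₀ y * μ y)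
            + (∫ s in (0:ℝ)..t, ∑' y, p x y (t - s) * h s * u y s ^ q * μ y) ∧
        (∑' y, p x y t * u₀ y * μ y)
            + (∫ s in (0:ℝ)..t, ∑' y, p x y (t - s) * h s * u y s ^ q * μ y) ≤ M := by
  intro u hu x t ht
  obtain ⟨ht0, htT⟩ := ht
  have hM0 : (0:ℝ) < M := lt_of_le_of_lt hN hM
  have hq0 : (0:ℝ) ≤ q := le_of_lt (lt_trans one_pos hq)
  have hMq0 : (0:ℝ) ≤ M ^ q := Real.rpow_nonneg hM0.le q
  -- integrability of h on [0, T]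
  have hhInt : MeasureTheory.IntegrableOn h (Set.Icc 0 T) :=
    hloc.integrableOn_compact_subset Set.Icc_subset_Ici_self isCompact_Icc
  have hInth0 : (0:ℝ) ≤ ∫ s in (0:ℝ)..T, h s := by
    apply intervalIntegral.integral_nonneg hT.le
    intro s hs; exact hh0 s hs.1
  -- the first term
  have hsumt := hsub x t ht0
  have hf0 : ∀ y, 0 ≤ p x y t * u₀ y * μ y := fun y =>
    mul_nonneg (mul_nonneg (hp x y t ht0) (hu₀ y).1) (hμ y).le
  have hfle : ∀ y, p x y t * u₀ y * μ y ≤ p x y t * μ y * N := by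
    intro y
    have h1 : u₀ y ≤ N := (hu₀ y).2
    have h2 : 0 ≤ p x y t * μ y := mul_nonneg (hp x y t ht0) (hμ y).le
    calc p x y t * u₀ y * μ y = (p x y t * μ y) * u₀ y := by ring
      _ ≤ (p x y t * μ y) * N := mul_le_mul_of_nonneg_left h1 h2
  have hgsum : Summable (fun y => p x y t * μ y * N) := hsumt.1.mul_right N
  have hfsum : Summable (fun y => p x y t * u₀ y * μ y) :=
    Summable.of_nonneg_of_le hf0 hfle hgsum
  have hA0 : 0 ≤ ∑' y, p x y t * u₀ y * μ y := tsum_nonneg hf0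
  have hAN : (∑' y, p x y t * u₀ y * μ y) ≤ N := by
    calc (∑' y, p x y t * u₀ y * μ y)
        ≤ ∑' y, p x y t * μ y * N := Summable.tsum_le_tsum hfle hfsum hgsum
      _ = (∑' y, p x y t * μ y) * N := tsum_mul_right
      _ ≤ 1 * N := mul_le_mul_of_nonneg_right hsumt.2 hN
      _ = N := one_mul N
  -- pointwise bounds on the inner sum, for s ∈ Ioo 0 t
  have hF0 : ∀ s ∈ Set.Ioo (0:ℝ) t,
      0 ≤ ∑' y, p x y (t - s) * h s * u y s ^ q * μ y := by
    intro s hs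
    have hts : 0 < t - s := sub_pos.2 hs.2
    have hsT : s ∈ Set.Ioo (0:ℝ) T := ⟨hs.1, hs.2.trans htT⟩
    refine tsum_nonneg fun y => ?_
    have := (hu y s hsT).1
    have huq : 0 ≤ u y s ^ q := Real.rpow_nonneg this q
    exact mul_nonneg (mul_nonneg (mul_nonneg (hp x y _ hts) (hh0 s hs.1.le)) huq)
      (hμ y).le
  have hFle : ∀ s ∈ Set.Ioo (0:ℝ) t,
      (∑' y, p x y (t - s) * h s * u y s ^ q * μ y) ≤ M ^ q * h s := by
    intro s hs
    have hts : 0 < t - s := sub_pos.2 hs.2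
    have hsT : s ∈ Set.Ioo (0:ℝ) T := ⟨hs.1, hs.2.trans htT⟩
    have hhs : 0 ≤ h s := hh0 s hs.1.le
    have hsums := hsub x (t - s) hts
    have hbig : Summable (fun y => p x y (t - s) * μ y * (h s * M ^ q)) :=
      hsums.1.mul_right _
    have hle : ∀ y, p x y (t - s) * h s * u y s ^ q * μ y
        ≤ p x y (t - s) * μ y * (h s * M ^ q) := by
      intro y
      have huy := hu y s hsT
      have huq : u y s ^ q ≤ M ^ q := Real.rpow_le_rpow huy.1 huy.2 hq0
      have h2 : 0 ≤ p x y (t - s) * μ y * h s :=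
        mul_nonneg (mul_nonneg (hp x y _ hts) (hμ y).le) hhs
      calc p x y (t - s) * h s * u y s ^ q * μ y
          = (p x y (t - s) * μ y * h s) * u y s ^ q := by ring
        _ ≤ (p x y (t - s) * μ y * h s) * M ^ q := mul_le_mul_of_nonneg_left huq h2
        _ = p x y (t - s) * μ y * (h s * M ^ q) := by ring
    have hnn : ∀ y, 0 ≤ p x y (t - s) * h s * u y s ^ q * μ y := by
      intro y
      have huq : 0 ≤ u y s ^ q := Real.rpow_nonneg (hu y s hsT).1 q
      exact mul_nonneg (mul_nonneg (mul_nonneg (hp x y _ hts) hhs) huq) (hμ y).le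
    have hsmallsum : Summable (fun y => p x y (t - s) * h s * u y s ^ q * μ y) :=
      Summable.of_nonneg_of_le hnn hle hbig
    calc (∑' y, p x y (t - s) * h s * u y s ^ q * μ y)
        ≤ ∑' y, p x y (t - s) * μ y * (h s * M ^ q) := Summable.tsum_le_tsum hle hsmallsum hbig
      _ = (∑' y, p x y (t - s) * μ y) * (h s * M ^ q) := tsum_mul_right
      _ ≤ 1 * (h s * M ^ q) :=
          mul_le_mul_of_nonneg_right hsums.2 (mul_nonneg hhs hMq0)
      _ = M ^ q * h s := by ring
  -- the integral term
  have hIoo : (∫ s in (0:ℝ)..t, ∑' y, p x y (t - s) * h s * u y s ^ q * μ y)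
      = ∫ s in Set.Ioo (0:ℝ) t, ∑' y, p x y (t - s) * h s * u y s ^ q * μ y := by
    rw [intervalIntegral.integral_of_le ht0.le, MeasureTheory.integral_Ioc_eq_integral_Ioo]
  have hI0 : 0 ≤ ∫ s in (0:ℝ)..t, ∑' y, p x y (t - s) * h s * u y s ^ q * μ y := by
    rw [hIoo]
    exact MeasureTheory.setIntegral_nonneg measurableSet_Ioo hF0
  have hIle : (∫ s in (0:ℝ)..t, ∑' y, p x y (t - s) * h s * u y s ^ q * μ y)
      ≤ M ^ q * ∫ s in (0:ℝ)..T, h s := by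
    by_cases hint : MeasureTheory.IntegrableOn
        (fun s => ∑' y, p x y (t - s) * h s * u y s ^ q * μ y) (Set.Ioo 0 t)
    · have hhIntT : MeasureTheory.IntegrableOn h (Set.Ioc 0 T) :=
        hhInt.mono_set Set.Ioc_subset_Icc_self
      have hgint : MeasureTheory.IntegrableOn (fun s => M ^ q * h s) (Set.Ioo 0 t) := by
        apply MeasureTheory.Integrable.const_mul
        exact (hhIntT.mono_set (fun s hs => ⟨hs.1, hs.2.le.trans htT.le⟩))
      rw [hIoo]
      calc (∫ s in Set.Ioo (0:ℝ) t, ∑' y, p x y (t - s) * h s * u y s ^ q * μ y)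
          ≤ ∫ s in Set.Ioo (0:ℝ) t, M ^ q * h s :=
            MeasureTheory.setIntegral_mono_on hint hgint measurableSet_Ioo hFle
        _ = M ^ q * ∫ s in Set.Ioo (0:ℝ) t, h s := MeasureTheory.integral_const_mul _ _
        _ ≤ M ^ q * ∫ s in Set.Ioc (0:ℝ) T, h s := by
            apply mul_le_mul_of_nonneg_left _ hMq0
            apply MeasureTheory.setIntegral_mono_set hhIntT
            · filter_upwards [MeasureTheory.ae_restrict_mem measurableSet_Ioc] with s hs
              exact hh0 s hs.1.le
            · exact Filter.Eventually.of_forall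
                (fun s hs => ⟨hs.1, hs.2.le.trans htT.le⟩)
        _ = M ^ q * ∫ s in (0:ℝ)..T, h s := by
            rw [intervalIntegral.integral_of_le hT.le]
    · have : (∫ s in (0:ℝ)..t, ∑' y, p x y (t - s) * h s * u y s ^ q * μ y) = 0 := by
        rw [hIoo]
        exact MeasureTheory.integral_undef hint
      rw [this]
      exact mul_nonneg hMq0 hInth0
  constructor
  · exact add_nonneg hA0 hI0
  · calc (∑' y, p x y t * u₀ y * μ y)
        + (∫ s in (0:ℝ)..t, ∑' y, p x y (t - s) * h s * u y s ^ q * μ y)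
        ≤ N + M ^ q * ∫ s in (0:ℝ)..T, h s := add_le_add hAN hIle
      _ ≤ M := hsmall
end

section
/- Let λ > 0, γ > 0, C > 0 be such that p(x,y,t) ≤ C e^{−λt} for all x,y ∈ G and all t ≥ γ. Let q > 1 and let h : [0,∞) → [0,∞) be locally integrable with H̃ := ∫₀^{+∞} h(t) e^{−λ(q−1)t} dt < +∞. Fix y₀ ∈ G. Then there exists ε₀ > 0 such that for every bounded u₀ : G → ℝ with 0 ≤ u₀(x) ≤ ε p(x,y₀,γ) for all x ∈ G and some ε ∈ (0, ε₀], there exist M > 0 and a function u : G × (0,∞) → ℝ with 0 ≤ u(x,t) ≤ M p(x,y₀,t+γ) for all x ∈ G, t > 0, satisfying u(x,t) = ∑_{y∈G} p(x,y,t) u₀(y) μ(y) + ∫₀^t ∑_{y∈G} p(x,y,t−s) h(s) u(y,s)^q μ(y) ds for all x ∈ G and all t > 0. -/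
/-!
The kernel, the measure and the data are moved to `ℝ≥0∞`, where every series and integral of the
Duhamel formula makes sense. There the monotone Picard iteration
`u_{n+1}(t) = P_t u₀ + ∫₀ᵗ P_{t-s}(h(s) u_n(s)^q) ds`, `u_0 = 0` (with `P_t = heatOp m K t`), can
be run before anything is known to converge. The barrier `u ≤ M p(·, y₀, · + γ)` is preserved as
soon as `ε + M^q C^{q-1} H̃ ≤ M`, because
`(M p(·, y₀, s + γ))^q ≤ M^q (C e^{-λs})^{q-1} p(·, y₀, s + γ)` and the semigroup law carries
`p(·, y₀, s + γ)` to `p(·, y₀, t + γ)`. With `M = 2ε` this holds for small `ε`, and the supremum of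
the iterates is a fixed point by monotone convergence.

No regularity of `p` in time is assumed. Measurability of `Φ(s) = P_{t-s}(u_n(s)^q)(x)` comes
instead from the one-sided estimate `Φ(s') ≤ Φ(s) + c ∫_s^{s'} h(r) e^{-λ(q-1)r} dr`, a consequence
of the semigroup law, Jensen's inequality for the sub-Markov operator `P_{t-s'}` and the convexity
of `x ↦ x^q`: it makes `Φ` the sum of a monotone and an antitone function.
-/

open MeasureTheory Set
open scoped ENNReal

theorem Real.add_rpow_le_rpow_add_mul {a d q : ℝ} (ha : 0 ≤ a) (hd : 0 ≤ d) (hq : 1 ≤ q) :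
    (a + d) ^ q ≤ a ^ q + q * (a + d) ^ (q - 1) * d := by
  rcases (add_nonneg ha hd).eq_or_lt with hb | hb
  · obtain ⟨rfl, rfl⟩ : a = 0 ∧ d = 0 := by constructor <;> linarith
    simp
  have hbern := one_add_mul_self_le_rpow_one_add (s := -(d / (a + d)))
    (by rw [neg_le_neg_iff, div_le_one hb]; linarith) hq
  have hsub : 1 + -(d / (a + d)) = a / (a + d) := by field_simp; ring
  rw [hsub, Real.div_rpow ha hb.le, le_div_iff₀ (by positivity)] at hbern
  have hpow : (a + d) ^ q = (a + d) ^ (q - 1) * (a + d) := by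
    rw [← Real.rpow_add_one hb.ne', sub_add_cancel]
  rw [hpow] at hbern ⊢
  field_simp at hbern
  nlinarith [Real.rpow_nonneg hb.le (q - 1)]

theorem exists_pos_rpow_mul_le {q A : ℝ} (hq : 1 < q) (hA : 0 ≤ A) :
    ∃ ε₀ > 0, ∀ ε ∈ Ioc 0 ε₀, ε ^ q * A ≤ ε := by
  refine ⟨(A + 1)⁻¹ ^ (q - 1)⁻¹, by positivity, fun ε ⟨hε, hεε₀⟩ => ?_⟩
  have hpow : ε ^ (q - 1) ≤ (A + 1)⁻¹ :=
    calc ε ^ (q - 1) ≤ ((A + 1)⁻¹ ^ (q - 1)⁻¹) ^ (q - 1) :=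
          Real.rpow_le_rpow hε.le hεε₀ (by linarith)
      _ = (A + 1)⁻¹ := Real.rpow_inv_rpow (by positivity) (by linarith)
  calc ε ^ q * A = ε ^ (q - 1) * A * ε := by
        rw [Real.rpow_sub_one hε.ne']; field_simp
    _ ≤ (A + 1)⁻¹ * A * ε := by gcongr
    _ ≤ 1 * ε := by
        gcongr
        rw [inv_mul_le_iff₀ (by positivity)]
        linarith
    _ = ε := one_mul ε

namespace ENNReal

theorem add_rpow_le_rpow_add_mul {a d : ℝ≥0∞} (ha : a ≠ ⊤) (hd : d ≠ ⊤) {q : ℝ}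
    (hq : 1 ≤ q) : (a + d) ^ q ≤ a ^ q + ENNReal.ofReal q * (a + d) ^ (q - 1) * d := by
  have key := ofReal_le_ofReal
    (Real.add_rpow_le_rpow_add_mul (a := a.toReal) (d := d.toReal) toReal_nonneg toReal_nonneg hq)
  rwa [ofReal_add (by positivity) (by positivity), ofReal_mul (by positivity),
    ofReal_mul (by positivity), ← toReal_add ha hd, toReal_rpow, toReal_rpow, toReal_rpow,
    ofReal_toReal, ofReal_toReal, ofReal_toReal, ofReal_toReal] at key
  all_goals finiteness

theorem iSup_rpow {ι : Sort*} (f : ι → ℝ≥0∞) {p : ℝ} (hp : 0 < p) :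
    (⨆ i, f i) ^ p = ⨆ i, f i ^ p :=
  (orderIsoRpow p hp).map_iSup f

theorem tsum_iSup_of_monotone {α : Type*} {f : α → ℕ → ℝ≥0∞} (hf : ∀ a, Monotone (f a)) :
    ∑' a, ⨆ n, f a n = ⨆ n, ∑' a, f a n := by
  simp_rw [ENNReal.tsum_eq_iSup_sum, finsetSum_iSup_of_monotone hf]
  exact iSup_comm

theorem tsum_mul_rpow_le {α : Type*} {w : α → ℝ≥0∞} (hw : ∑' a, w a ≤ 1) (f : α → ℝ≥0∞)
    {p : ℝ} (hp : 1 ≤ p) : (∑' a, w a * f a) ^ p ≤ ∑' a, w a * f a ^ p := by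
  have hp0 : 0 < p := by linarith
  rw [← le_rpow_inv_iff hp0]
  refine ENNReal.summable.tsum_le_of_sum_le fun s => ?_
  calc ∑ a ∈ s, w a * f a
      ≤ (∑ a ∈ s, w a) ^ (1 - p⁻¹) * (∑ a ∈ s, w a * f a ^ p) ^ p⁻¹ :=
        inner_le_weight_mul_Lp_of_nonneg s hp w f
    _ ≤ 1 * (∑' a, w a * f a ^ p) ^ p⁻¹ := by
        gcongr
        · exact rpow_le_one ((ENNReal.sum_le_tsum s).trans hw)
            (sub_nonneg.2 (inv_le_one_of_one_le₀ hp))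
        · exact ENNReal.sum_le_tsum s
    _ = _ := one_mul _

theorem exists_pos_ofReal_add_rpow_mul_le {q : ℝ} (hq : 1 < q) {H : ℝ≥0∞} (hH : H ≠ ⊤) :
    ∃ ε₀ > 0, ∀ ε ∈ Ioc 0 ε₀,
      ENNReal.ofReal ε + ENNReal.ofReal (2 * ε) ^ q * H ≤ ENNReal.ofReal (2 * ε) := by
  obtain ⟨ε₀, hε₀, hsmall⟩ := exists_pos_rpow_mul_le hq (A := 2 ^ q * H.toReal) (by positivity)
  refine ⟨ε₀, hε₀, fun ε hε => ?_⟩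
  have hε0 := hε.1.le
  have h2ε : (2 * ε) ^ q * H.toReal ≤ ε :=
    calc (2 * ε) ^ q * H.toReal = ε ^ q * (2 ^ q * H.toReal) := by
          rw [Real.mul_rpow (by norm_num) hε0]; ring
      _ ≤ ε := hsmall ε hε
  calc ENNReal.ofReal ε + ENNReal.ofReal (2 * ε) ^ q * H
      = ENNReal.ofReal ε + ENNReal.ofReal ((2 * ε) ^ q * H.toReal) := by
        rw [ofReal_rpow_of_nonneg (by positivity) (by linarith),
          ofReal_mul (by positivity), ofReal_toReal hH]
    _ ≤ ENNReal.ofReal ε + ENNReal.ofReal ε := by gcongr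
    _ = ENNReal.ofReal (2 * ε) := by rw [← ofReal_add hε0 hε0, two_mul]

end ENNReal

theorem setLIntegral_ofReal_mul_exp_rpow_ne_top {h : ℝ → ℝ} {lam C q : ℝ} (hC : 0 ≤ C)
    (hq : 1 ≤ q) (hh : ∀ t, 0 ≤ t → 0 ≤ h t)
    (hHt : IntegrableOn (fun t => h t * Real.exp (-(lam * (q - 1)) * t)) (Ioi 0)) :
    ∫⁻ s in Ioi 0, ENNReal.ofReal (h s) * ENNReal.ofReal (C * Real.exp (-lam * s)) ^ (q - 1)
      ≠ ⊤ := by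
  have hpoint : ∀ s ∈ Ioi (0 : ℝ),
      ENNReal.ofReal (h s) * ENNReal.ofReal (C * Real.exp (-lam * s)) ^ (q - 1)
        = ENNReal.ofReal (C ^ (q - 1)) * ENNReal.ofReal (h s * Real.exp (-(lam * (q - 1)) * s)) :=
    fun s hs => by
      rw [ENNReal.ofReal_rpow_of_nonneg (by positivity) (by linarith),
        ← ENNReal.ofReal_mul (hh s (le_of_lt hs)), ← ENNReal.ofReal_mul (by positivity),
        Real.mul_rpow hC (Real.exp_pos _).le, ← Real.exp_mul]
      ring_nf
  rw [setLIntegral_congr_fun measurableSet_Ioi hpoint,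
    lintegral_const_mul' _ _ ENNReal.ofReal_ne_top]
  exact ENNReal.mul_ne_top ENNReal.ofReal_ne_top hHt.lintegral_lt_top.ne

theorem aemeasurable_restrict_of_add_le_add {f g : ℝ → ℝ≥0∞} {S : Set ℝ} (hS : MeasurableSet S)
    (hg : Monotone g) (hg_top : ∀ s, g s ≠ ⊤) (hf_top : ∀ s ∈ S, f s ≠ ⊤)
    (hfg : ∀ s ∈ S, ∀ s' ∈ S, s ≤ s' → f s' + g s ≤ f s + g s') :
    AEMeasurable f (volume.restrict S) := by
  have hanti : AntitoneOn (fun s => (f s).toReal - (g s).toReal) S := fun s hs s' hs' hss' => by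
    have h := ENNReal.toReal_mono (ENNReal.add_ne_top.2 ⟨hf_top s hs, hg_top s'⟩)
      (hfg s hs s' hs' hss')
    rw [ENNReal.toReal_add (hf_top s' hs') (hg_top s),
      ENNReal.toReal_add (hf_top s hs) (hg_top s')] at h
    dsimp only
    linarith
  have hg_meas : Measurable fun s => (g s).toReal :=
    Monotone.measurable fun s s' h => ENNReal.toReal_mono (hg_top s') (hg h)
  refine ((aemeasurable_restrict_of_antitoneOn hS hanti).add
    hg_meas.aemeasurable).ennreal_ofReal.congr ?_
  filter_upwards [ae_restrict_mem hS] with s hs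
  simp [ENNReal.ofReal_toReal (hf_top s hs)]

theorem setLIntegral_Ioo_eq_add_Ico {f : ℝ → ℝ≥0∞} {a b c : ℝ} (hab : a < b) (hbc : b ≤ c) :
    ∫⁻ r in Ioo a c, f r = (∫⁻ r in Ioo a b, f r) + ∫⁻ r in Ico b c, f r := by
  rw [← Ioo_union_Ico_eq_Ioo hab hbc,
    lintegral_union measurableSet_Ico (Set.disjoint_left.2 fun _ h1 h2 => h1.2.not_ge h2.1)]

namespace SemilinearHeat

variable {G : Type*}

noncomputable def heatOp (m : G → ℝ≥0∞) (K : G → G → ℝ → ℝ≥0∞) (t : ℝ) (f : G → ℝ≥0∞) (x : G) :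
    ℝ≥0∞ :=
  ∑' y, K x y t * f y * m y

structure IsSubMarkovSemigroup (m : G → ℝ≥0∞) (K : G → G → ℝ → ℝ≥0∞) : Prop where
  tsum_le_one : ∀ x t, 0 < t → ∑' y, K x y t * m y ≤ 1
  chapman_kolmogorov : ∀ x y t s, 0 < t → 0 < s → K x y (t + s) = ∑' z, K x z t * K z y s * m z

section HeatOp

variable {m : G → ℝ≥0∞} {K : G → G → ℝ → ℝ≥0∞} {t s : ℝ} {f g : G → ℝ≥0∞} {x : G}

theorem heatOp_mono (hfg : ∀ y, f y ≤ g y) : heatOp m K t f x ≤ heatOp m K t g x :=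
  ENNReal.tsum_le_tsum fun y => by gcongr; exact hfg y

theorem heatOp_const_mul (c : ℝ≥0∞) :
    heatOp m K t (fun y => c * f y) x = c * heatOp m K t f x := by
  simp only [heatOp, ← ENNReal.tsum_mul_left]
  exact tsum_congr fun y => by ring

theorem heatOp_add : heatOp m K t (fun y => f y + g y) x = heatOp m K t f x + heatOp m K t g x := by
  simp only [heatOp, ← ENNReal.tsum_add]
  exact tsum_congr fun y => by ring

theorem heatOp_const_le (hK : IsSubMarkovSemigroup m K) (ht : 0 < t) (c : ℝ≥0∞) :
    heatOp m K t (fun _ => c) x ≤ c :=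
  calc heatOp m K t (fun _ => c) x = c * ∑' y, K x y t * m y := by
        simp only [heatOp, ← ENNReal.tsum_mul_left]
        exact tsum_congr fun y => by ring
    _ ≤ c * 1 := by gcongr; exact hK.tsum_le_one x t ht
    _ = c := mul_one c

theorem heatOp_heatOp (hK : IsSubMarkovSemigroup m K) (ht : 0 < t) (hs : 0 < s) (f : G → ℝ≥0∞) :
    heatOp m K t (heatOp m K s f) x = heatOp m K (t + s) f x := by
  simp only [heatOp, hK.chapman_kolmogorov x _ t s ht hs, ← ENNReal.tsum_mul_left,
    ← ENNReal.tsum_mul_right]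
  rw [ENNReal.tsum_comm]
  exact tsum_congr fun z => tsum_congr fun y => by ring

theorem heatOp_kernel (hK : IsSubMarkovSemigroup m K) (ht : 0 < t) (hs : 0 < s) (y₀ : G) :
    heatOp m K t (fun y => K y y₀ s) x = K x y₀ (t + s) := by
  rw [hK.chapman_kolmogorov x y₀ t s ht hs]
  exact tsum_congr fun y => by ring

theorem rpow_heatOp_le (hK : IsSubMarkovSemigroup m K) (ht : 0 < t) (f : G → ℝ≥0∞) {q : ℝ}
    (hq : 1 ≤ q) : heatOp m K t f x ^ q ≤ heatOp m K t (fun y => f y ^ q) x := by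
  have hw : ∑' y, K x y t * m y ≤ 1 := hK.tsum_le_one x t ht
  simp only [heatOp, mul_right_comm _ _ (m _)] at hw ⊢
  exact ENNReal.tsum_mul_rpow_le hw f hq

theorem lintegral_heatOp [Countable G] {α : Type*} [MeasurableSpace α] {μ : Measure α}
    {F : α → G → ℝ≥0∞} (hF : ∀ y, AEMeasurable (fun r => F r y) μ) :
    ∫⁻ r, heatOp m K t (F r) x ∂μ = heatOp m K t (fun y => ∫⁻ r, F r y ∂μ) x := by
  simp only [heatOp]
  rw [lintegral_tsum fun y => ((hF y).const_mul _).mul_const _]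
  refine tsum_congr fun y => ?_
  rw [lintegral_mul_const'' _ ((hF y).const_mul _), lintegral_const_mul'' _ (hF y)]

end HeatOp

variable (m : G → ℝ≥0∞) (K : G → G → ℝ → ℝ≥0∞) (q : ℝ) (w : ℝ → ℝ≥0∞) (u₀ : G → ℝ≥0∞)

noncomputable def nonlinearTerm (u : G → ℝ → ℝ≥0∞) (x : G) (t s : ℝ) : ℝ≥0∞ :=
  heatOp m K (t - s) (fun y => u y s ^ q) x

-- Integrating over the open interval keeps both `s` and `t - s` positive: the kernel is only
-- constrained at positive times.
noncomputable def duhamel (u : G → ℝ → ℝ≥0∞) (x : G) (t : ℝ) : ℝ≥0∞ :=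
  heatOp m K t u₀ x + ∫⁻ s in Ioo 0 t, w s * nonlinearTerm m K q u x t s

noncomputable def picardLimit (x : G) (t : ℝ) : ℝ≥0∞ :=
  ⨆ n, (duhamel m K q w u₀)^[n] 0 x t

def IsBelowBarrier (y₀ : G) (γ : ℝ) (M : ℝ≥0∞) (u : G → ℝ → ℝ≥0∞) : Prop :=
  ∀ x t, 0 < t → u x t ≤ M * K x y₀ (t + γ)

section Barrier

variable {m K q w u₀} {y₀ : G} {γ : ℝ} {D : ℝ → ℝ≥0∞} {B M ε : ℝ≥0∞} {u : G → ℝ → ℝ≥0∞}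
  {x : G} {t s : ℝ}

theorem nonlinearTerm_le (hK : IsSubMarkovSemigroup m K) (hγ : 0 < γ)
    (hKD : ∀ x s, 0 < s → K x y₀ (s + γ) ≤ D s) (hq : 1 ≤ q) (hu : IsBelowBarrier K y₀ γ M u)
    (hs : 0 < s) (hst : s < t) :
    nonlinearTerm m K q u x t s ≤ M ^ q * D s ^ (q - 1) * K x y₀ (t + γ) := by
  have hpow : ∀ y, u y s ^ q ≤ M ^ q * D s ^ (q - 1) * K y y₀ (s + γ) := fun y => by
    have hsplit : K y y₀ (s + γ) ^ q = K y y₀ (s + γ) ^ (q - 1) * K y y₀ (s + γ) := by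
      simpa using
        ENNReal.rpow_add_of_nonneg (x := K y y₀ (s + γ)) (q - 1) 1 (by linarith) zero_le_one
    calc u y s ^ q ≤ (M * K y y₀ (s + γ)) ^ q := ENNReal.rpow_le_rpow (hu y s hs) (by linarith)
      _ = M ^ q * (K y y₀ (s + γ) ^ (q - 1) * K y y₀ (s + γ)) := by
          rw [ENNReal.mul_rpow_of_nonneg _ _ (by linarith), hsplit]
      _ ≤ M ^ q * (D s ^ (q - 1) * K y y₀ (s + γ)) := by
          gcongr
          exact hKD y s hs
      _ = M ^ q * D s ^ (q - 1) * K y y₀ (s + γ) := by ring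
  calc nonlinearTerm m K q u x t s
      ≤ heatOp m K (t - s) (fun y => M ^ q * D s ^ (q - 1) * K y y₀ (s + γ)) x := heatOp_mono hpow
    _ = M ^ q * D s ^ (q - 1) * K x y₀ (t - s + (s + γ)) := by
        rw [heatOp_const_mul, heatOp_kernel hK (by linarith) (by linarith)]
    _ = M ^ q * D s ^ (q - 1) * K x y₀ (t + γ) := by ring_nf

theorem lintegral_nonlinearTerm_le (hK : IsSubMarkovSemigroup m K) (hγ : 0 < γ)
    (hKD : ∀ x s, 0 < s → K x y₀ (s + γ) ≤ D s) (hDB : ∀ s, 0 < s → D s ≤ B) (hB : B ≠ ⊤)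
    (hq : 1 ≤ q) (hM : M ≠ ⊤) (hu : IsBelowBarrier K y₀ γ M u) {S : Set ℝ}
    (hS : MeasurableSet S) (hSt : S ⊆ Ioo 0 t) (ht : 0 < t) :
    ∫⁻ r in S, w r * nonlinearTerm m K q u x t r ≤
      M ^ q * K x y₀ (t + γ) * ∫⁻ r in S, w r * D r ^ (q - 1) := by
  have hc : M ^ q * K x y₀ (t + γ) ≠ ⊤ := ENNReal.mul_ne_top
    (ENNReal.rpow_ne_top_of_nonneg (by linarith) hM)
    (ne_top_of_le_ne_top hB ((hKD x t ht).trans (hDB t ht)))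
  calc ∫⁻ r in S, w r * nonlinearTerm m K q u x t r
      ≤ ∫⁻ r in S, M ^ q * K x y₀ (t + γ) * (w r * D r ^ (q - 1)) :=
        setLIntegral_mono' hS fun r hr =>
          calc w r * nonlinearTerm m K q u x t r
              ≤ w r * (M ^ q * D r ^ (q - 1) * K x y₀ (t + γ)) := by
                gcongr; exact nonlinearTerm_le hK hγ hKD hq hu (hSt hr).1 (hSt hr).2
            _ = M ^ q * K x y₀ (t + γ) * (w r * D r ^ (q - 1)) := by ring
    _ = M ^ q * K x y₀ (t + γ) * ∫⁻ r in S, w r * D r ^ (q - 1) := lintegral_const_mul' _ _ hc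

theorem nonlinearTerm_mono (hq : 0 ≤ q) {v : G → ℝ → ℝ≥0∞} (huv : u ≤ v) :
    nonlinearTerm m K q u x t s ≤ nonlinearTerm m K q v x t s :=
  heatOp_mono fun y => ENNReal.rpow_le_rpow (huv y s) hq

theorem duhamel_mono (hq : 0 ≤ q) : Monotone (duhamel m K q w u₀) := fun _ _ huv _ _ =>
  add_le_add le_rfl (lintegral_mono fun _ => mul_le_mul_right (nonlinearTerm_mono hq huv) _)

theorem isBelowBarrier_duhamel (hK : IsSubMarkovSemigroup m K) (hγ : 0 < γ)
    (hKD : ∀ x s, 0 < s → K x y₀ (s + γ) ≤ D s) (hDB : ∀ s, 0 < s → D s ≤ B) (hB : B ≠ ⊤)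
    (hq : 1 ≤ q) (hM : M ≠ ⊤) (hu₀ : ∀ x, u₀ x ≤ ε * K x y₀ γ)
    (hsmall : ε + M ^ q * ∫⁻ s in Ioi 0, w s * D s ^ (q - 1) ≤ M)
    (hu : IsBelowBarrier K y₀ γ M u) : IsBelowBarrier K y₀ γ M (duhamel m K q w u₀ u) := by
  intro x t ht
  have hlin : heatOp m K t u₀ x ≤ ε * K x y₀ (t + γ) :=
    (heatOp_mono hu₀).trans_eq (by rw [heatOp_const_mul, heatOp_kernel hK ht hγ])
  have hint := lintegral_nonlinearTerm_le (w := w) (x := x) hK hγ hKD hDB hB hq hM hu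
    measurableSet_Ioo subset_rfl ht
  calc duhamel m K q w u₀ u x t
      ≤ ε * K x y₀ (t + γ) + M ^ q * K x y₀ (t + γ) * ∫⁻ s in Ioi 0, w s * D s ^ (q - 1) :=
        add_le_add hlin (hint.trans (by gcongr; exact Ioo_subset_Ioi_self))
    _ = (ε + M ^ q * ∫⁻ s in Ioi 0, w s * D s ^ (q - 1)) * K x y₀ (t + γ) := by ring
    _ ≤ M * K x y₀ (t + γ) := by gcongr

theorem isBelowBarrier_iterate (hK : IsSubMarkovSemigroup m K) (hγ : 0 < γ)
    (hKD : ∀ x s, 0 < s → K x y₀ (s + γ) ≤ D s) (hDB : ∀ s, 0 < s → D s ≤ B) (hB : B ≠ ⊤)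
    (hq : 1 ≤ q) (hM : M ≠ ⊤) (hu₀ : ∀ x, u₀ x ≤ ε * K x y₀ γ)
    (hsmall : ε + M ^ q * ∫⁻ s in Ioi 0, w s * D s ^ (q - 1) ≤ M) :
    ∀ n, IsBelowBarrier K y₀ γ M ((duhamel m K q w u₀)^[n] 0)
  | 0 => fun _ _ _ => zero_le
  | n + 1 => by
    rw [Function.iterate_succ_apply']
    exact isBelowBarrier_duhamel hK hγ hKD hDB hB hq hM hu₀ hsmall
      (isBelowBarrier_iterate hK hγ hKD hDB hB hq hM hu₀ hsmall n)

theorem duhamel_eq_heatOp_add [Countable G] (hK : IsSubMarkovSemigroup m K)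
    (hw : AEMeasurable w (volume.restrict (Ioi 0)))
    (hmeas : ∀ z, AEMeasurable (nonlinearTerm m K q u z s) (volume.restrict (Ioo 0 s)))
    {s' : ℝ} (hs : 0 < s) (hss' : s < s') (y : G) :
    duhamel m K q w u₀ u y s' = heatOp m K (s' - s) (fun z => duhamel m K q w u₀ u z s) y
      + ∫⁻ r in Ico s s', w r * nonlinearTerm m K q u y s' r := by
  have hpast : ∫⁻ r in Ioo 0 s, w r * nonlinearTerm m K q u y s' r
      = heatOp m K (s' - s) (fun z => ∫⁻ r in Ioo 0 s, w r * nonlinearTerm m K q u z s r) y := by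
    rw [← lintegral_heatOp (F := fun r z => w r * nonlinearTerm m K q u z s r) fun z =>
      (hw.mono_measure (Measure.restrict_mono Ioo_subset_Ioi_self le_rfl)).mul (hmeas z)]
    refine setLIntegral_congr_fun measurableSet_Ioo fun r hr => ?_
    rw [heatOp_const_mul]
    simp only [nonlinearTerm]
    rw [heatOp_heatOp hK (by linarith) (by linarith [hr.2]), sub_add_sub_cancel]
  have hlin : heatOp m K s' u₀ y = heatOp m K (s' - s) (fun z => heatOp m K s u₀ z) y := by
    rw [heatOp_heatOp hK (by linarith) hs, sub_add_cancel]
  rw [duhamel, setLIntegral_Ioo_eq_add_Ico hs hss'.le, hpast, hlin, ← add_assoc, ← heatOp_add]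
  rfl

theorem rpow_duhamel_le [Countable G] (hK : IsSubMarkovSemigroup m K) (hγ : 0 < γ)
    (hKD : ∀ x s, 0 < s → K x y₀ (s + γ) ≤ D s) (hDB : ∀ s, 0 < s → D s ≤ B) (hB : B ≠ ⊤)
    (hw : AEMeasurable w (volume.restrict (Ioi 0))) (hq : 1 ≤ q) (hM : M ≠ ⊤)
    (hu : IsBelowBarrier K y₀ γ M u) (hv : IsBelowBarrier K y₀ γ M (duhamel m K q w u₀ u))
    (hmeas : ∀ z, AEMeasurable (nonlinearTerm m K q u z s) (volume.restrict (Ioo 0 s)))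
    {s' : ℝ} (hs : 0 < s) (hss' : s < s') (z : G) :
    duhamel m K q w u₀ u z s' ^ q
      ≤ heatOp m K (s' - s) (fun y => duhamel m K q w u₀ u y s) z ^ q
        + ENNReal.ofReal q * (M * B) ^ (q - 1) * (M ^ q * B)
          * ∫⁻ r in Ico s s', w r * D r ^ (q - 1) := by
  have hs' : 0 < s' := hs.trans hss'
  have hKB : K z y₀ (s' + γ) ≤ B := (hKD z s' hs').trans (hDB s' hs')
  have hvB : duhamel m K q w u₀ u z s' ≤ M * B := (hv z s' hs').trans (by gcongr)
  have htail : ∫⁻ r in Ico s s', w r * nonlinearTerm m K q u z s' r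
      ≤ M ^ q * B * ∫⁻ r in Ico s s', w r * D r ^ (q - 1) :=
    (lintegral_nonlinearTerm_le hK hγ hKD hDB hB hq hM hu measurableSet_Ico
      (fun r hr => ⟨hs.trans_le hr.1, hr.2⟩) hs').trans (by gcongr)
  rw [duhamel_eq_heatOp_add hK hw hmeas hs hss'] at hvB ⊢
  have hfin := ENNReal.add_ne_top.1 (ne_top_of_le_ne_top (ENNReal.mul_ne_top hM hB) hvB)
  calc _ ≤ _ := ENNReal.add_rpow_le_rpow_add_mul hfin.1 hfin.2 hq
    _ ≤ heatOp m K (s' - s) (fun y => duhamel m K q w u₀ u y s) z ^ q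
        + ENNReal.ofReal q * (M * B) ^ (q - 1)
          * (M ^ q * B * ∫⁻ r in Ico s s', w r * D r ^ (q - 1)) := by
        gcongr
    _ = _ := by ring

theorem nonlinearTerm_duhamel_le [Countable G] (hK : IsSubMarkovSemigroup m K) (hγ : 0 < γ)
    (hKD : ∀ x s, 0 < s → K x y₀ (s + γ) ≤ D s) (hDB : ∀ s, 0 < s → D s ≤ B) (hB : B ≠ ⊤)
    (hw : AEMeasurable w (volume.restrict (Ioi 0))) (hq : 1 ≤ q) (hM : M ≠ ⊤)
    (hu : IsBelowBarrier K y₀ γ M u) (hv : IsBelowBarrier K y₀ γ M (duhamel m K q w u₀ u))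
    (hmeas : ∀ z, AEMeasurable (nonlinearTerm m K q u z s) (volume.restrict (Ioo 0 s)))
    {s' : ℝ} (hs : 0 < s) (hss' : s < s') (hs't : s' < t) :
    nonlinearTerm m K q (duhamel m K q w u₀ u) x t s'
      ≤ nonlinearTerm m K q (duhamel m K q w u₀ u) x t s
        + ENNReal.ofReal q * (M * B) ^ (q - 1) * (M ^ q * B)
          * ∫⁻ r in Ico s s', w r * D r ^ (q - 1) := by
  set c := ENNReal.ofReal q * (M * B) ^ (q - 1) * (M ^ q * B)
    * ∫⁻ r in Ico s s', w r * D r ^ (q - 1)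
  calc nonlinearTerm m K q (duhamel m K q w u₀ u) x t s'
      ≤ heatOp m K (t - s')
          (fun z => heatOp m K (s' - s) (fun y => duhamel m K q w u₀ u y s) z ^ q + c) x :=
        heatOp_mono (rpow_duhamel_le hK hγ hKD hDB hB hw hq hM hu hv hmeas hs hss')
    _ ≤ heatOp m K (t - s')
          (fun z => heatOp m K (s' - s) (fun y => duhamel m K q w u₀ u y s ^ q) z) x + c := by
        rw [heatOp_add]
        exact add_le_add (heatOp_mono fun z => rpow_heatOp_le hK (by linarith) _ hq)
          (heatOp_const_le hK (by linarith) _)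
    _ = nonlinearTerm m K q (duhamel m K q w u₀ u) x t s + c := by
        rw [heatOp_heatOp hK (by linarith) (by linarith), sub_add_sub_cancel]
        rfl

theorem nonlinearTerm_ne_top (hK : IsSubMarkovSemigroup m K) (hγ : 0 < γ)
    (hKD : ∀ x s, 0 < s → K x y₀ (s + γ) ≤ D s) (hDB : ∀ s, 0 < s → D s ≤ B) (hB : B ≠ ⊤)
    (hq : 1 ≤ q) (hM : M ≠ ⊤) (hu : IsBelowBarrier K y₀ γ M u) (hs : 0 < s) (hst : s < t) :
    nonlinearTerm m K q u x t s ≠ ⊤ := by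
  have hD := ne_top_of_le_ne_top hB (hDB s hs)
  have hK' := ne_top_of_le_ne_top hB ((hKD x t (hs.trans hst)).trans (hDB t (hs.trans hst)))
  refine ne_top_of_le_ne_top ?_ (nonlinearTerm_le hK hγ hKD hq hu hs hst)
  have hq0 : 0 ≤ q - 1 := by linarith
  finiteness

theorem aemeasurable_nonlinearTerm_duhamel [Countable G] (hK : IsSubMarkovSemigroup m K)
    (hγ : 0 < γ) (hKD : ∀ x s, 0 < s → K x y₀ (s + γ) ≤ D s) (hDB : ∀ s, 0 < s → D s ≤ B)
    (hB : B ≠ ⊤) (hw : AEMeasurable w (volume.restrict (Ioi 0))) (hq : 1 ≤ q) (hM : M ≠ ⊤)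
    (hH : ∫⁻ s in Ioi 0, w s * D s ^ (q - 1) ≠ ⊤) (hu : IsBelowBarrier K y₀ γ M u)
    (hv : IsBelowBarrier K y₀ γ M (duhamel m K q w u₀ u))
    (hmeas : ∀ z s, AEMeasurable (nonlinearTerm m K q u z s) (volume.restrict (Ioo 0 s)))
    (x : G) (t : ℝ) :
    AEMeasurable (nonlinearTerm m K q (duhamel m K q w u₀ u) x t) (volume.restrict (Ioo 0 t)) := by
  set c := ENNReal.ofReal q * (M * B) ^ (q - 1) * (M ^ q * B)
  have hc : c ≠ ⊤ := by
    have hq0 : 0 ≤ q - 1 := by linarith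
    finiteness
  refine aemeasurable_restrict_of_add_le_add measurableSet_Ioo
    (g := fun s => c * ∫⁻ r in Ioo 0 s, w r * D r ^ (q - 1))
    (fun s s' hss' => mul_le_mul_right (lintegral_mono_set (Ioo_subset_Ioo_right hss')) c)
    (fun s => ENNReal.mul_ne_top hc (ne_top_of_le_ne_top hH
      (lintegral_mono_set Ioo_subset_Ioi_self)))
    (fun s hs => nonlinearTerm_ne_top hK hγ hKD hDB hB hq hM hv hs.1 hs.2) ?_
  intro s hs s' hs' hss'
  rcases hss'.eq_or_lt with rfl | hlt
  · exact le_rfl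
  calc _ ≤ nonlinearTerm m K q (duhamel m K q w u₀ u) x t s
          + c * (∫⁻ r in Ico s s', w r * D r ^ (q - 1))
          + c * ∫⁻ r in Ioo 0 s, w r * D r ^ (q - 1) := by
        gcongr
        exact nonlinearTerm_duhamel_le hK hγ hKD hDB hB hw hq hM hu hv (fun z => hmeas z s)
          hs.1 hlt hs'.2
    _ = _ := by
        rw [setLIntegral_Ioo_eq_add_Ico hs.1 hlt.le]
        ring

theorem aemeasurable_nonlinearTerm_iterate [Countable G] (hK : IsSubMarkovSemigroup m K)
    (hγ : 0 < γ) (hKD : ∀ x s, 0 < s → K x y₀ (s + γ) ≤ D s) (hDB : ∀ s, 0 < s → D s ≤ B)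
    (hB : B ≠ ⊤) (hw : AEMeasurable w (volume.restrict (Ioi 0))) (hq : 1 ≤ q) (hM : M ≠ ⊤)
    (hu₀ : ∀ x, u₀ x ≤ ε * K x y₀ γ) (hH : ∫⁻ s in Ioi 0, w s * D s ^ (q - 1) ≠ ⊤)
    (hsmall : ε + M ^ q * ∫⁻ s in Ioi 0, w s * D s ^ (q - 1) ≤ M) :
    ∀ n x t, AEMeasurable (nonlinearTerm m K q ((duhamel m K q w u₀)^[n] 0) x t)
      (volume.restrict (Ioo 0 t))
  | 0, x, t => by
    have hzero : nonlinearTerm m K q ((duhamel m K q w u₀)^[0] 0) x t = 0 := by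
      funext s
      simp [nonlinearTerm, heatOp, ENNReal.zero_rpow_of_pos (by linarith : 0 < q)]
    rw [hzero]
    exact aemeasurable_const
  | n + 1, x, t => by
    have hu := isBelowBarrier_iterate hK hγ hKD hDB hB hq hM hu₀ hsmall n
    rw [Function.iterate_succ_apply']
    exact aemeasurable_nonlinearTerm_duhamel hK hγ hKD hDB hB hw hq hM hH hu
      (isBelowBarrier_duhamel hK hγ hKD hDB hB hq hM hu₀ hsmall hu)
      (aemeasurable_nonlinearTerm_iterate hK hγ hKD hDB hB hw hq hM hu₀ hH hsmall n) x t

theorem nonlinearTerm_iSup (hq : 0 < q) {u : ℕ → G → ℝ → ℝ≥0∞} (hu : Monotone u) :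
    nonlinearTerm m K q (fun y r => ⨆ n, u n y r) x t s = ⨆ n, nonlinearTerm m K q (u n) x t s := by
  simp only [nonlinearTerm, heatOp, ENNReal.iSup_rpow _ hq, ENNReal.mul_iSup, ENNReal.iSup_mul]
  exact ENNReal.tsum_iSup_of_monotone fun y n n' h => by gcongr; exact hu h y s

theorem duhamel_iSup (hq : 0 < q) (hw : AEMeasurable w (volume.restrict (Ioi 0)))
    {u : ℕ → G → ℝ → ℝ≥0∞} (hu : Monotone u)
    (hmeas : ∀ n, AEMeasurable (nonlinearTerm m K q (u n) x t) (volume.restrict (Ioo 0 t))) :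
    duhamel m K q w u₀ (fun y r => ⨆ n, u n y r) x t = ⨆ n, duhamel m K q w u₀ (u n) x t := by
  simp only [duhamel, nonlinearTerm_iSup hq hu, ENNReal.mul_iSup]
  rw [lintegral_iSup' (f := fun n s => w s * nonlinearTerm m K q (u n) x t s)
      (fun n => (hw.mono_measure (Measure.restrict_mono Ioo_subset_Ioi_self le_rfl)).mul (hmeas n))
      (ae_of_all _ fun s n n' h => mul_le_mul_right (nonlinearTerm_mono hq.le (hu h)) _),
    ENNReal.add_iSup]

end Barrier

section PicardLimit

variable {m K q w u₀} {y₀ : G} {γ : ℝ} {D : ℝ → ℝ≥0∞} {B M ε : ℝ≥0∞}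

theorem monotone_iterate_duhamel (hq : 0 ≤ q) : Monotone fun n => (duhamel m K q w u₀)^[n] 0 :=
  (duhamel_mono hq).monotone_iterate_of_le_map fun _ _ => zero_le

theorem isBelowBarrier_picardLimit (hK : IsSubMarkovSemigroup m K) (hγ : 0 < γ)
    (hKD : ∀ x s, 0 < s → K x y₀ (s + γ) ≤ D s) (hDB : ∀ s, 0 < s → D s ≤ B) (hB : B ≠ ⊤)
    (hq : 1 ≤ q) (hM : M ≠ ⊤) (hu₀ : ∀ x, u₀ x ≤ ε * K x y₀ γ)
    (hsmall : ε + M ^ q * ∫⁻ s in Ioi 0, w s * D s ^ (q - 1) ≤ M) :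
    IsBelowBarrier K y₀ γ M (picardLimit m K q w u₀) := fun x t ht =>
  iSup_le fun n => isBelowBarrier_iterate hK hγ hKD hDB hB hq hM hu₀ hsmall n x t ht

theorem duhamel_picardLimit [Countable G] (hK : IsSubMarkovSemigroup m K) (hγ : 0 < γ)
    (hKD : ∀ x s, 0 < s → K x y₀ (s + γ) ≤ D s) (hDB : ∀ s, 0 < s → D s ≤ B) (hB : B ≠ ⊤)
    (hw : AEMeasurable w (volume.restrict (Ioi 0))) (hq : 1 ≤ q) (hM : M ≠ ⊤)
    (hu₀ : ∀ x, u₀ x ≤ ε * K x y₀ γ) (hH : ∫⁻ s in Ioi 0, w s * D s ^ (q - 1) ≠ ⊤)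
    (hsmall : ε + M ^ q * ∫⁻ s in Ioi 0, w s * D s ^ (q - 1) ≤ M) :
    duhamel m K q w u₀ (picardLimit m K q w u₀) = picardLimit m K q w u₀ := by
  funext x t
  have hmono := monotone_iterate_duhamel (m := m) (K := K) (w := w) (u₀ := u₀) (by linarith)
  refine (duhamel_iSup (by linarith) hw hmono fun n =>
    aemeasurable_nonlinearTerm_iterate hK hγ hKD hDB hB hw hq hM hu₀ hH hsmall n x t).trans ?_
  simp_rw [← Function.iterate_succ_apply' (duhamel m K q w u₀)]
  exact Monotone.iSup_nat_add (fun _ _ h => hmono h x t) 1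

theorem aemeasurable_nonlinearTerm_picardLimit [Countable G] (hK : IsSubMarkovSemigroup m K)
    (hγ : 0 < γ) (hKD : ∀ x s, 0 < s → K x y₀ (s + γ) ≤ D s) (hDB : ∀ s, 0 < s → D s ≤ B)
    (hB : B ≠ ⊤) (hw : AEMeasurable w (volume.restrict (Ioi 0))) (hq : 1 ≤ q) (hM : M ≠ ⊤)
    (hu₀ : ∀ x, u₀ x ≤ ε * K x y₀ γ) (hH : ∫⁻ s in Ioi 0, w s * D s ^ (q - 1) ≠ ⊤)
    (hsmall : ε + M ^ q * ∫⁻ s in Ioi 0, w s * D s ^ (q - 1) ≤ M) (x : G) (t : ℝ) :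
    AEMeasurable (nonlinearTerm m K q (picardLimit m K q w u₀) x t)
      (volume.restrict (Ioo 0 t)) := by
  have hmono := monotone_iterate_duhamel (m := m) (K := K) (w := w) (u₀ := u₀) (by linarith)
  have hsup : nonlinearTerm m K q (picardLimit m K q w u₀) x t
      = fun s => ⨆ n, nonlinearTerm m K q ((duhamel m K q w u₀)^[n] 0) x t s :=
    funext fun _ => nonlinearTerm_iSup (by linarith) hmono
  rw [hsup]
  exact AEMeasurable.iSup fun n =>
    aemeasurable_nonlinearTerm_iterate hK hγ hKD hDB hB hw hq hM hu₀ hH hsmall n x t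

theorem exists_isBelowBarrier_duhamel_fixedPoint [Countable G] (hK : IsSubMarkovSemigroup m K)
    (hγ : 0 < γ) (hKD : ∀ x s, 0 < s → K x y₀ (s + γ) ≤ D s) (hDB : ∀ s, 0 < s → D s ≤ B)
    (hB : B ≠ ⊤) (hw : AEMeasurable w (volume.restrict (Ioi 0))) (hq : 1 ≤ q) (hM : M ≠ ⊤)
    (hu₀ : ∀ x, u₀ x ≤ ε * K x y₀ γ) (hH : ∫⁻ s in Ioi 0, w s * D s ^ (q - 1) ≠ ⊤)
    (hsmall : ε + M ^ q * ∫⁻ s in Ioi 0, w s * D s ^ (q - 1) ≤ M) :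
    ∃ U, IsBelowBarrier K y₀ γ M U ∧ duhamel m K q w u₀ U = U ∧
      ∀ x t, AEMeasurable (fun s => w s * nonlinearTerm m K q U x t s)
        (volume.restrict (Ioo 0 t)) :=
  ⟨picardLimit m K q w u₀, isBelowBarrier_picardLimit hK hγ hKD hDB hB hq hM hu₀ hsmall,
    duhamel_picardLimit hK hγ hKD hDB hB hw hq hM hu₀ hH hsmall, fun x t =>
      (hw.mono_measure (Measure.restrict_mono Ioo_subset_Ioi_self le_rfl)).mul
        (aemeasurable_nonlinearTerm_picardLimit hK hγ hKD hDB hB hw hq hM hu₀ hH hsmall x t)⟩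

end PicardLimit

section RealKernel

variable {μ : G → ℝ} {p : G → G → ℝ → ℝ}

theorem isSubMarkovSemigroup_ofReal (hμ : ∀ x, 0 < μ x) (hp : ∀ x y t, 0 < t → 0 < p x y t)
    (hsub : ∀ x (t : ℝ), 0 < t →
      Summable (fun y => p x y t * μ y) ∧ (∑' y, p x y t * μ y) ≤ 1)
    (hsemi : ∀ x y (t s : ℝ), 0 < t → 0 < s →
      p x y (t + s) = ∑' z, p x z t * p z y s * μ z) :
    IsSubMarkovSemigroup (fun y => ENNReal.ofReal (μ y))
      (fun x y t => ENNReal.ofReal (p x y t)) where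
  tsum_le_one x t ht :=
    calc ∑' y, ENNReal.ofReal (p x y t) * ENNReal.ofReal (μ y)
        = ENNReal.ofReal (∑' y, p x y t * μ y) := by
          rw [ENNReal.ofReal_tsum_of_nonneg (fun y => (mul_pos (hp x y t ht) (hμ y)).le)
            (hsub x t ht).1]
          exact tsum_congr fun y => (ENNReal.ofReal_mul (hp x y t ht).le).symm
      _ ≤ 1 := ENNReal.ofReal_le_one.2 (hsub x t ht).2
  chapman_kolmogorov x y t s ht hs := by
    have hpos : ∀ z, 0 < p x z t * p z y s * μ z := fun z =>
      mul_pos (mul_pos (hp x z t ht) (hp z y s hs)) (hμ z)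
    -- positivity of `p x y (t + s)` rules out the junk value `0` of a non-summable series
    have hsum : Summable fun z => p x z t * p z y s * μ z := by
      by_contra hns
      have h := hp x y (t + s) (by linarith)
      rw [hsemi x y t s ht hs, tsum_eq_zero_of_not_summable hns] at h
      exact h.false
    rw [hsemi x y t s ht hs, ENNReal.ofReal_tsum_of_nonneg (fun z => (hpos z).le) hsum]
    exact tsum_congr fun z => by
      rw [ENNReal.ofReal_mul (mul_pos (hp x z t ht) (hp z y s hs)).le,
        ENNReal.ofReal_mul (hp x z t ht).le]

theorem toReal_heatOp_ofReal {f : G → ℝ} {x : G} {t : ℝ} (hμ : ∀ y, 0 ≤ μ y)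
    (hp : ∀ y, 0 ≤ p x y t) (hf : ∀ y, 0 ≤ f y) :
    (heatOp (fun y => ENNReal.ofReal (μ y)) (fun x y t => ENNReal.ofReal (p x y t)) t
      (fun y => ENNReal.ofReal (f y)) x).toReal = ∑' y, p x y t * f y * μ y := by
  rw [heatOp, ENNReal.tsum_toReal_eq fun y => by finiteness]
  exact tsum_congr fun y => by
    simp [ENNReal.toReal_ofReal, hμ y, hp y, hf y]

theorem toReal_eq_of_duhamel_eq {q : ℝ} (hq : 0 ≤ q) {h : ℝ → ℝ} {u₀ : G → ℝ}
    (hμ : ∀ x, 0 < μ x) (hp : ∀ x y t, 0 < t → 0 < p x y t) (hh : ∀ t, 0 ≤ t → 0 ≤ h t)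
    (hu₀ : ∀ x, 0 ≤ u₀ x) {U : G → ℝ → ℝ≥0∞}
    (hfix : duhamel (fun y => ENNReal.ofReal (μ y)) (fun x y t => ENNReal.ofReal (p x y t)) q
      (fun s => ENNReal.ofReal (h s)) (fun y => ENNReal.ofReal (u₀ y)) U = U)
    (hU : ∀ x t, 0 < t → U x t ≠ ⊤)
    (hmeas : ∀ x t, AEMeasurable (fun s => ENNReal.ofReal (h s) * nonlinearTerm
      (fun y => ENNReal.ofReal (μ y)) (fun x y t => ENNReal.ofReal (p x y t)) q U x t s)
      (volume.restrict (Ioo 0 t)))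
    {x : G} {t : ℝ} (ht : 0 < t) :
    (U x t).toReal = (∑' y, p x y t * u₀ y * μ y)
      + ∫ s in (0:ℝ)..t, ∑' y, p x y (t - s) * h s * (U y s).toReal ^ q * μ y := by
  have hfin := hU x t ht
  rw [← congrFun (congrFun hfix x) t, duhamel] at hfin ⊢
  obtain ⟨hlin, hint⟩ := ENNReal.add_ne_top.1 hfin
  rw [ENNReal.toReal_add hlin hint,
    toReal_heatOp_ofReal (fun y => (hμ y).le) (fun y => (hp x y t ht).le) hu₀,
    intervalIntegral.integral_of_le ht.le, integral_Ioc_eq_integral_Ioo,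
    ← integral_toReal (hmeas x t) (ae_lt_top' (hmeas x t) hint)]
  congr 1
  refine setIntegral_congr_fun measurableSet_Ioo fun s hs => ?_
  have hpow : ∀ y, ENNReal.ofReal (h s * (U y s).toReal ^ q) = ENNReal.ofReal (h s) * U y s ^ q :=
    fun y => by
      rw [ENNReal.ofReal_mul (hh s hs.1.le),
        ← ENNReal.ofReal_rpow_of_nonneg ENNReal.toReal_nonneg hq,
        ENNReal.ofReal_toReal (hU y s hs.1)]
  rw [nonlinearTerm, ← heatOp_const_mul]
  simp_rw [← hpow]
  rw [toReal_heatOp_ofReal (fun y => (hμ y).le) (fun y => (hp x y (t - s) (sub_pos.2 hs.2)).le)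
    fun y => by have := hh s hs.1.le; positivity]
  exact tsum_congr fun y => by ring

end RealKernel

end SemilinearHeat

open SemilinearHeat in
/-- global existence of a mild solution for small initial data,
under the heat-kernel bound `p(x,y,t) ≤ C e^{-λt}` for `t ≥ γ` and
`H̃ = ∫₀^∞ h(t) e^{-λ(q-1)t} dt < ∞`. -/
theorem global_existence
    {G : Type*} [Countable G] (μ : G → ℝ) (hμ : ∀ x, 0 < μ x)
    (p : G → G → ℝ → ℝ) (hp : ∀ x y t, 0 < t → 0 < p x y t)
    (hsub : ∀ x (t : ℝ), 0 < t →
      Summable (fun y => p x y t * μ y) ∧ (∑' y, p x y t * μ y) ≤ 1)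
    (hsemi : ∀ x y (t s : ℝ), 0 < t → 0 < s →
      p x y (t + s) = ∑' z, p x z t * p z y s * μ z)
    (lam γ C : ℝ) (hlam : 0 < lam) (hγ : 0 < γ) (hC : 0 < C)
    (hkernel : ∀ x y (t : ℝ), γ ≤ t → p x y t ≤ C * Real.exp (-lam * t))
    (q : ℝ) (hq : 1 < q)
    (h : ℝ → ℝ) (hh0 : ∀ t, 0 ≤ t → 0 ≤ h t)
    (hloc : MeasureTheory.LocallyIntegrableOn h (Set.Ici 0))
    (hHt : MeasureTheory.IntegrableOn
      (fun t => h t * Real.exp (-(lam * (q - 1)) * t)) (Set.Ioi 0))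
    (y₀ : G) :
    ∃ ε₀ > (0:ℝ), ∀ (u₀ : G → ℝ), (∃ B, ∀ x, u₀ x ≤ B) →
      (∃ ε, ε ∈ Set.Ioc 0 ε₀ ∧ ∀ x, 0 ≤ u₀ x ∧ u₀ x ≤ ε * p x y₀ γ) →
      ∃ M > (0:ℝ), ∃ u : G → ℝ → ℝ,
        (∀ x (t : ℝ), 0 < t → 0 ≤ u x t ∧ u x t ≤ M * p x y₀ (t + γ)) ∧
        (∀ x (t : ℝ), 0 < t →
          u x t = (∑' y, p x y t * u₀ y * μ y)
            + ∫ s in (0:ℝ)..t, ∑' y, p x y (t - s) * h s * u y s ^ q * μ y) := by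
  set K : G → G → ℝ → ℝ≥0∞ := fun x y t => ENNReal.ofReal (p x y t)
  set D : ℝ → ℝ≥0∞ := fun s => ENNReal.ofReal (C * Real.exp (-lam * s))
  have hK := isSubMarkovSemigroup_ofReal hμ hp hsub hsemi
  have hKD : ∀ x s, 0 < s → K x y₀ (s + γ) ≤ D s := fun x s hs =>
    ENNReal.ofReal_le_ofReal ((hkernel x y₀ _ (by linarith)).trans
      (mul_le_mul_of_nonneg_left (Real.exp_le_exp.2 (by nlinarith)) hC.le))
  have hDB : ∀ s, 0 < s → D s ≤ ENNReal.ofReal C := fun s hs => ENNReal.ofReal_le_ofReal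
    (mul_le_of_le_one_right hC.le (Real.exp_le_one_iff.2 (by nlinarith)))
  have hw : AEMeasurable (fun s => ENNReal.ofReal (h s)) (volume.restrict (Ioi 0)) :=
    (ENNReal.measurable_ofReal.comp_aemeasurable
      hloc.aestronglyMeasurable.aemeasurable).mono_measure
        (Measure.restrict_mono Ioi_subset_Ici_self le_rfl)
  have hH := setLIntegral_ofReal_mul_exp_rpow_ne_top hC.le hq.le hh0 hHt
  obtain ⟨ε₀, hε₀, hsmall⟩ := ENNReal.exists_pos_ofReal_add_rpow_mul_le hq hH
  refine ⟨ε₀, hε₀, ?_⟩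
  rintro u₀ - ⟨ε, hε, hu₀⟩
  have hu₀' : ∀ x, ENNReal.ofReal (u₀ x) ≤ ENNReal.ofReal ε * K x y₀ γ := fun x =>
    (ENNReal.ofReal_le_ofReal (hu₀ x).2).trans_eq (ENNReal.ofReal_mul hε.1.le)
  obtain ⟨U, hbar, hfix, hmeas⟩ := exists_isBelowBarrier_duhamel_fixedPoint hK hγ hKD hDB
    ENNReal.ofReal_ne_top hw hq.le ENNReal.ofReal_ne_top hu₀' hH (hsmall ε hε)
  have h2ε : 0 ≤ 2 * ε := by linarith [hε.1]
  refine ⟨2 * ε, by linarith [hε.1], fun x t => (U x t).toReal,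
    fun x t ht => ⟨ENNReal.toReal_nonneg, ?_⟩, fun x t ht => ?_⟩
  · exact ENNReal.toReal_le_of_le_ofReal
      (mul_nonneg h2ε (hp x y₀ (t + γ) (by linarith)).le)
      ((hbar x t ht).trans_eq (ENNReal.ofReal_mul h2ε).symm)
  · exact toReal_eq_of_duhamel_eq (by linarith) hμ hp hh0 (fun x => (hu₀ x).1) hfix
      (fun x t ht => ne_top_of_le_ne_top (by finiteness) (hbar x t ht)) hmeas ht
end

section
/- Let λ > 0, γ > 0, C > 0 be such that p(x,y,t) ≤ C e^{−λt} for all x,y ∈ G and all t ≥ γ. Let q > 1, let h : [0,∞) → [0,∞) be locally integrable with H̃ := ∫₀^{+∞} h(t) e^{−λ(q−1)t} dt < +∞, and fix y₀ ∈ G. Let δ > 0, M > 0 and ε > 0 satisfy M ≤ δ/C, δ^{q−1} H̃ < 1 and 0 < ε < M (1 − δ^{q−1} H̃). Let u₀ : G → ℝ satisfy 0 ≤ u₀(x) ≤ ε p(x,y₀,γ) for all x ∈ G. Then for every u : G × (0,∞) → ℝ with 0 ≤ u(x,t) ≤ M p(x,y₀,t+γ) for all x ∈ G, t > 0, the function (Ψu)(x,t)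 := ∑_{y∈G} p(x,y,t) u₀(y) μ(y) + ∫₀^t ∑_{y∈G} p(x,y,t−s) h(s) u(y,s)^q μ(y) ds satisfies 0 ≤ (Ψu)(x,t) ≤ (ε + M δ^{q−1} H̃) p(x,y₀,t+γ) ≤ M p(x,y₀,t+γ) for all x ∈ G and t > 0. -/
set_option maxHeartbeats 1000000 in
/-- the map `Ψ` maps the weighted ball
`{0 ≤ u ≤ M p(·,y₀,·+γ)}` into itself, with the sharper bound
`Ψu ≤ (ε + M δ^{q-1} H̃) p(·,y₀,·+γ) ≤ M p(·,y₀,·+γ)`. -/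
theorem Psi_maps_weighted_ball
    {G : Type*} [Countable G] (μ : G → ℝ) (hμ : ∀ x, 0 < μ x)
    (p : G → G → ℝ → ℝ) (hp : ∀ x y t, 0 < t → 0 < p x y t)
    (hsub : ∀ x (t : ℝ), 0 < t →
      Summable (fun y => p x y t * μ y) ∧ (∑' y, p x y t * μ y) ≤ 1)
    (hsemi : ∀ x y (t s : ℝ), 0 < t → 0 < s →
      p x y (t + s) = ∑' z, p x z t * p z y s * μ z)
    (lam γ C : ℝ) (hlam : 0 < lam) (hγ : 0 < γ) (hC : 0 < C)
    (hkernel : ∀ x y (t : ℝ), γ ≤ t → p x y t ≤ C * Real.exp (-lam * t))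
    (q : ℝ) (hq : 1 < q)
    (h : ℝ → ℝ) (hh0 : ∀ t, 0 ≤ t → 0 ≤ h t)
    (hloc : MeasureTheory.LocallyIntegrableOn h (Set.Ici 0))
    (Htilde : ℝ)
    (hHt : Htilde = ∫ t in Set.Ioi (0:ℝ), h t * Real.exp (-(lam * (q - 1)) * t))
    (hHint : MeasureTheory.IntegrableOn
      (fun t => h t * Real.exp (-(lam * (q - 1)) * t)) (Set.Ioi 0))
    (y₀ : G)
    (δ M ε : ℝ) (hδ : 0 < δ) (hM : 0 < M) (hMδ : M ≤ δ / C)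
    (hδH : δ ^ (q - 1) * Htilde < 1)
    (hε : 0 < ε) (hεM : ε < M * (1 - δ ^ (q - 1) * Htilde))
    (u₀ : G → ℝ) (hu₀ : ∀ x, 0 ≤ u₀ x ∧ u₀ x ≤ ε * p x y₀ γ) :
    ∀ u : G → ℝ → ℝ,
      (∀ x (t : ℝ), 0 < t → 0 ≤ u x t ∧ u x t ≤ M * p x y₀ (t + γ)) →
      ∀ x (t : ℝ), 0 < t →
        0 ≤ (∑' y, p x y t * u₀ y * μ y)
            + (∫ s in (0:ℝ)..t, ∑' y, p x y (t - s) * h s * u y s ^ q * μ y) ∧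
        (∑' y, p x y t * u₀ y * μ y)
            + (∫ s in (0:ℝ)..t, ∑' y, p x y (t - s) * h s * u y s ^ q * μ y)
          ≤ (ε + M * δ ^ (q - 1) * Htilde) * p x y₀ (t + γ) ∧
        (ε + M * δ ^ (q - 1) * Htilde) * p x y₀ (t + γ) ≤ M * p x y₀ (t + γ) := by

  intro u hu x t ht
  have hq0 : (0:ℝ) ≤ q - 1 := by linarith
  have htγ : 0 < t + γ := by linarith
  have hP : 0 < p x y₀ (t + γ) := hp _ _ _ htγ
  have hδq : 0 < δ ^ (q - 1) := Real.rpow_pos_of_pos hδ _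
  have hHt0 : 0 ≤ Htilde := by
    rw [hHt]
    apply MeasureTheory.setIntegral_nonneg measurableSet_Ioi
    intro s hs
    exact mul_nonneg (hh0 s (le_of_lt hs)) (Real.exp_pos _).le
  have hεM' : ε + M * δ ^ (q - 1) * Htilde ≤ M := by nlinarith
  have hlast : (ε + M * δ ^ (q - 1) * Htilde) * p x y₀ (t + γ) ≤ M * p x y₀ (t + γ) :=
    mul_le_mul_of_nonneg_right hεM' hP.le
  -- summability of the semigroup family
  have sumG : ∀ (a b : ℝ), 0 < a → γ ≤ b →
      Summable (fun z => p x z a * p z y₀ b * μ z) := by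
    intro a b ha hb
    have hb0 : 0 < b := lt_of_lt_of_le hγ hb
    refine Summable.of_nonneg_of_le (fun z => ?_) (fun z => ?_)
      (((hsub x a ha).1).mul_left (C * Real.exp (-lam * b)))
    · exact mul_nonneg (mul_nonneg (hp _ _ _ ha).le (hp _ _ _ hb0).le) (hμ z).le
    · have h1 := hkernel z y₀ b hb
      have h2 := hp x z a ha
      have h3 := hμ z
      nlinarith [mul_le_mul_of_nonneg_left h1 (mul_nonneg h2.le h3.le)]
  have hGval : ∀ (a b : ℝ), 0 < a → 0 < b →
      (∑' z, p x z a * p z y₀ b * μ z) = p x y₀ (a + b) :=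
    fun a b ha hb => (hsemi x y₀ a b ha hb).symm
  -- Term A
  have hAnn : ∀ y, 0 ≤ p x y t * u₀ y * μ y := fun y =>
    mul_nonneg (mul_nonneg (hp _ _ _ ht).le (hu₀ y).1) (hμ y).le
  have hAle : ∀ y, p x y t * u₀ y * μ y ≤ ε * (p x y t * p y y₀ γ * μ y) := by
    intro y
    have h1 := (hu₀ y).2
    have h2 := hp x y t ht
    have h3 := hμ y
    nlinarith [mul_le_mul_of_nonneg_left h1 (mul_nonneg h2.le h3.le)]
  have hGt := sumG t γ ht le_rfl
  have hAsum : Summable (fun y => p x y t * u₀ y * μ y) :=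
    Summable.of_nonneg_of_le hAnn hAle (hGt.mul_left ε)
  have hA0 : 0 ≤ ∑' y, p x y t * u₀ y * μ y := tsum_nonneg hAnn
  have hA : (∑' y, p x y t * u₀ y * μ y) ≤ ε * p x y₀ (t + γ) := by
    calc (∑' y, p x y t * u₀ y * μ y)
        ≤ ∑' y, ε * (p x y t * p y y₀ γ * μ y) :=
          Summable.tsum_le_tsum hAle hAsum (hGt.mul_left ε)
      _ = ε * ∑' y, p x y t * p y y₀ γ * μ y := tsum_mul_left
      _ = ε * p x y₀ (t + γ) := by rw [hGval t γ ht hγ]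
  by_cases hint : IntervalIntegrable
      (fun s => ∑' y, p x y (t - s) * h s * u y s ^ q * μ y) MeasureTheory.volume 0 t
  case neg =>
    rw [intervalIntegral.integral_undef hint]
    have hnn : 0 ≤ M * δ ^ (q - 1) * Htilde * p x y₀ (t + γ) :=
      mul_nonneg (mul_nonneg (mul_nonneg hM.le hδq.le) hHt0) hP.le
    refine ⟨by linarith, ?_, hlast⟩
    nlinarith
  case pos =>
    rw [intervalIntegral.integral_of_le ht.le, MeasureTheory.integral_Ioc_eq_integral_Ioo]
    have hFint : MeasureTheory.IntegrableOn
        (fun s => ∑' y, p x y (t - s) * h s * u y s ^ q * μ y) (Set.Ioo 0 t) :=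
      hint.1.mono_set Set.Ioo_subset_Ioc_self
    have hFnn : ∀ s ∈ Set.Ioo (0:ℝ) t,
        0 ≤ ∑' y, p x y (t - s) * h s * u y s ^ q * μ y := by
      intro s hs
      refine tsum_nonneg fun y => ?_
      have hts : 0 < t - s := by linarith [hs.2]
      exact mul_nonneg (mul_nonneg (mul_nonneg (hp _ _ _ hts).le (hh0 s hs.1.le))
        (Real.rpow_nonneg (hu y s hs.1).1 q)) (hμ y).le
    have hB0 : 0 ≤ ∫ s in Set.Ioo (0:ℝ) t, ∑' y, p x y (t - s) * h s * u y s ^ q * μ y :=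
      MeasureTheory.setIntegral_nonneg measurableSet_Ioo hFnn
    have hpoint : ∀ s ∈ Set.Ioo (0:ℝ) t,
        (∑' y, p x y (t - s) * h s * u y s ^ q * μ y)
          ≤ (M * δ ^ (q - 1) * p x y₀ (t + γ)) * (h s * Real.exp (-(lam * (q - 1)) * s)) := by
      intro s hs
      have hs0 := hs.1
      have hts : 0 < t - s := by linarith [hs.2]
      have hsγ : γ ≤ s + γ := by linarith
      have hsγ0 : 0 < s + γ := by linarith
      have hG := sumG (t - s) (s + γ) hts hsγ
      have hkey : ∀ y, u y s ^ q
          ≤ M * δ ^ (q - 1) * Real.exp (-(lam * (q - 1)) * s) * p y y₀ (s + γ) := by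
        intro y
        obtain ⟨hu0, hub⟩ := hu y s hs0
        have hpy : 0 < p y y₀ (s + γ) := hp _ _ _ hsγ0
        have hpk : p y y₀ (s + γ) ≤ C * Real.exp (-lam * (s + γ)) := hkernel _ _ _ hsγ
        have hMP : 0 < M * p y y₀ (s + γ) := mul_pos hM hpy
        have s1 : u y s ^ q ≤ (M * p y y₀ (s + γ)) ^ q :=
          Real.rpow_le_rpow hu0 hub (by linarith)
        have s2 : (M * p y y₀ (s + γ)) ^ q
            = (M * p y y₀ (s + γ)) ^ (q - 1) * (M * p y y₀ (s + γ)) := by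
          have h12 := Real.rpow_add hMP (q - 1) 1
          rw [Real.rpow_one] at h12
          calc (M * p y y₀ (s + γ)) ^ q = (M * p y y₀ (s + γ)) ^ (q - 1 + 1) := by norm_num
            _ = _ := h12
        have hMC : M * C ≤ δ := by
          rw [le_div_iff₀ hC] at hMδ; linarith
        have s3 : (M * p y y₀ (s + γ)) ^ (q - 1)
            ≤ (δ * Real.exp (-lam * (s + γ))) ^ (q - 1) := by
          apply Real.rpow_le_rpow hMP.le ?_ hq0
          nlinarith [mul_le_mul_of_nonneg_left hpk hM.le,
            mul_le_mul_of_nonneg_right hMC (Real.exp_pos (-lam * (s + γ))).le]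
        have s4 : (δ * Real.exp (-lam * (s + γ))) ^ (q - 1)
            = δ ^ (q - 1) * (Real.exp (-lam * (s + γ))) ^ (q - 1) :=
          Real.mul_rpow hδ.le (Real.exp_pos _).le
        have s5 : (Real.exp (-lam * (s + γ))) ^ (q - 1)
            = Real.exp (-lam * (s + γ) * (q - 1)) := by
          rw [Real.rpow_def_of_pos (Real.exp_pos _), Real.log_exp]
        have s6 : Real.exp (-lam * (s + γ) * (q - 1)) ≤ Real.exp (-(lam * (q - 1)) * s) := by
          apply Real.exp_le_exp.mpr
          have h1 : 0 ≤ lam * γ * (q - 1) := mul_nonneg (mul_nonneg hlam.le hγ.le) hq0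
          have h2 : -lam * (s + γ) * (q - 1) = -(lam * (q - 1)) * s - lam * γ * (q - 1) := by
            ring
          linarith
        calc u y s ^ q ≤ (M * p y y₀ (s + γ)) ^ q := s1
          _ = (M * p y y₀ (s + γ)) ^ (q - 1) * (M * p y y₀ (s + γ)) := s2
          _ ≤ (δ ^ (q - 1) * Real.exp (-lam * (s + γ) * (q - 1))) * (M * p y y₀ (s + γ)) := by
              apply mul_le_mul_of_nonneg_right _ hMP.le
              rw [← s5, ← s4]; exact s3
          _ ≤ (δ ^ (q - 1) * Real.exp (-(lam * (q - 1)) * s)) * (M * p y y₀ (s + γ)) :=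
              mul_le_mul_of_nonneg_right (mul_le_mul_of_nonneg_left s6 hδq.le) hMP.le
          _ = M * δ ^ (q - 1) * Real.exp (-(lam * (q - 1)) * s) * p y y₀ (s + γ) := by ring
      have hterm : ∀ y, p x y (t - s) * h s * u y s ^ q * μ y
          ≤ (M * δ ^ (q - 1) * (h s * Real.exp (-(lam * (q - 1)) * s)))
              * (p x y (t - s) * p y y₀ (s + γ) * μ y) := by
        intro y
        have h2 : 0 ≤ p x y (t - s) * h s := mul_nonneg (hp _ _ _ hts).le (hh0 s hs0.le)
        calc p x y (t - s) * h s * u y s ^ q * μ y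
            ≤ p x y (t - s) * h s
                * (M * δ ^ (q - 1) * Real.exp (-(lam * (q - 1)) * s) * p y y₀ (s + γ)) * μ y :=
              mul_le_mul_of_nonneg_right (mul_le_mul_of_nonneg_left (hkey y) h2) (hμ y).le
          _ = _ := by ring
      have hFnn' : ∀ y, 0 ≤ p x y (t - s) * h s * u y s ^ q * μ y := fun y =>
        mul_nonneg (mul_nonneg (mul_nonneg (hp _ _ _ hts).le (hh0 s hs0.le))
          (Real.rpow_nonneg (hu y s hs0).1 q)) (hμ y).le
      have hFsum : Summable (fun y => p x y (t - s) * h s * u y s ^ q * μ y) :=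
        Summable.of_nonneg_of_le hFnn' hterm (hG.mul_left _)
      calc (∑' y, p x y (t - s) * h s * u y s ^ q * μ y)
          ≤ ∑' y, (M * δ ^ (q - 1) * (h s * Real.exp (-(lam * (q - 1)) * s)))
              * (p x y (t - s) * p y y₀ (s + γ) * μ y) :=
            Summable.tsum_le_tsum hterm hFsum (hG.mul_left _)
        _ = (M * δ ^ (q - 1) * (h s * Real.exp (-(lam * (q - 1)) * s)))
              * ∑' y, p x y (t - s) * p y y₀ (s + γ) * μ y := tsum_mul_left
        _ = (M * δ ^ (q - 1) * (h s * Real.exp (-(lam * (q - 1)) * s)))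
              * p x y₀ ((t - s) + (s + γ)) := by rw [hGval _ _ hts hsγ0]
        _ = (M * δ ^ (q - 1) * p x y₀ (t + γ)) * (h s * Real.exp (-(lam * (q - 1)) * s)) := by
              rw [show (t - s) + (s + γ) = t + γ by ring]; ring
    have hgint : MeasureTheory.IntegrableOn
        (fun s => h s * Real.exp (-(lam * (q - 1)) * s)) (Set.Ioo 0 t) :=
      hHint.mono_set (fun s hs => hs.1)
    have hcnn : 0 ≤ M * δ ^ (q - 1) * p x y₀ (t + γ) :=
      mul_nonneg (mul_nonneg hM.le hδq.le) hP.le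
    have hB : (∫ s in Set.Ioo (0:ℝ) t, ∑' y, p x y (t - s) * h s * u y s ^ q * μ y)
        ≤ M * δ ^ (q - 1) * Htilde * p x y₀ (t + γ) := by
      calc (∫ s in Set.Ioo (0:ℝ) t, ∑' y, p x y (t - s) * h s * u y s ^ q * μ y)
          ≤ ∫ s in Set.Ioo (0:ℝ) t,
              (M * δ ^ (q - 1) * p x y₀ (t + γ)) * (h s * Real.exp (-(lam * (q - 1)) * s)) :=
            MeasureTheory.setIntegral_mono_on hFint (hgint.const_mul _) measurableSet_Ioo hpoint
        _ = (M * δ ^ (q - 1) * p x y₀ (t + γ))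
              * ∫ s in Set.Ioo (0:ℝ) t, h s * Real.exp (-(lam * (q - 1)) * s) :=
            MeasureTheory.integral_const_mul _ _
        _ ≤ (M * δ ^ (q - 1) * p x y₀ (t + γ)) * Htilde := by
            apply mul_le_mul_of_nonneg_left _ hcnn
            rw [hHt]
            apply MeasureTheory.setIntegral_mono_set hHint ?_
              (HasSubset.Subset.eventuallyLE (fun s hs => hs.1))
            filter_upwards [MeasureTheory.ae_restrict_mem measurableSet_Ioi] with s hs
            exact mul_nonneg (hh0 s hs.le) (Real.exp_pos _).le
        _ = M * δ ^ (q - 1) * Htilde * p x y₀ (t + γ) := by ring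
    refine ⟨by linarith, ?_, hlast⟩
    nlinarith
end
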